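/- Let A ∈ ℝ^{I×R} have full column rank R and let B ∈ ℝ^{J×R} have no zero column. Then the Khatri–Rao product A ⊙ B ∈ ℝ^{IJ×R} has full column rank R. -/

import Mathlib

open Matrix MeasureTheory

namespace LBGM

/-- The set of latent variables connected to observed variable `j`. -/
def co {J K : ℕ} (G : Fin J → Fin K → Bool) (j : Fin J) : Finset (Fin K) :=
  Finset.univ.filter (fun k => G j k = true)

/-- The set of latent variables connected to some observed variable in `S`. -/
def coS {J K : ℕ} (G : Fin J → Fin K → Bool) (S : Finset (Fin J)) : Finset (Fin K) :=
  S.biUnion (co G)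

/-- `θ j` depends only on the latent coordinates in `co G j`. -/
def DependsOnlyOnCo {J K V H : ℕ} (G : Fin J → Fin K → Bool)
    (θ : Fin J → (Fin K → Fin H) → Fin V → ℝ) : Prop :=
  ∀ (j : Fin J) (a a' : Fin K → Fin H), (∀ k ∈ co G j, a k = a' k) → θ j a = θ j a'

/-- Every `θ j (· | a)` is a probability vector on `{0,…,V-1}`. -/
def IsCPT {J K V H : ℕ} (θ : Fin J → (Fin K → Fin H) → Fin V → ℝ) : Prop :=
  ∀ j a, (∀ v, 0 ≤ θ j a v) ∧ (∑ v, θ j a v) = 1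

/-- `ν` is a probability mass function on `{0,…,H-1}^K`. -/
def IsPMF {K H : ℕ} (ν : (Fin K → Fin H) → ℝ) : Prop :=
  (∀ a, 0 ≤ ν a) ∧ (∑ a, ν a) = 1

/-- Induced joint pmf of the observed vector `Y`. -/
noncomputable def jointP {J K V H : ℕ} (ν : (Fin K → Fin H) → ℝ)
    (θ : Fin J → (Fin K → Fin H) → Fin V → ℝ) (y : Fin J → Fin V) : ℝ :=
  ∑ a : Fin K → Fin H, ν a * ∏ j, θ j a (y j)

/-- Extend a latent configuration on `S` to all of `[K]`, filling in `0` elsewhere. -/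
def extendA {K H : ℕ} [NeZero H] (S : Finset (Fin K)) (a : {k // k ∈ S} → Fin H) :
    Fin K → Fin H :=
  fun k => if h : k ∈ S then a ⟨k, h⟩ else 0

/-- Conditional probability table `P(Y_M | A_S)`. -/
noncomputable def cpt {J K V H : ℕ} [NeZero H]
    (θ : Fin J → (Fin K → Fin H) → Fin V → ℝ)
    (M : Finset (Fin J)) (S : Finset (Fin K)) :
    Matrix ({j // j ∈ M} → Fin V) ({k // k ∈ S} → Fin H) ℝ :=
  Matrix.of fun y a => ∏ j : {j // j ∈ M}, θ j.1 (extendA S a) (y j)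

/-- Unfolded tensor `[T]_{S₁,S₂}`: the matrix of joint marginal probabilities of
`Y_{S₁}` and `Y_{S₂}`. -/
noncomputable def unfoldT {J K V H : ℕ} (ν : (Fin K → Fin H) → ℝ)
    (θ : Fin J → (Fin K → Fin H) → Fin V → ℝ) (S₁ S₂ : Finset (Fin J)) :
    Matrix ({j // j ∈ S₁} → Fin V) ({j // j ∈ S₂} → Fin V) ℝ :=
  Matrix.of fun r c => ∑ y : Fin J → Fin V,
    if (∀ j : {j // j ∈ S₁}, y j.1 = r j) ∧ (∀ j : {j // j ∈ S₂}, y j.1 = c j)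
      then jointP ν θ y else 0

/-- `[T]_{S,:} = [T]_{S, [J]∖S}`. -/
noncomputable def unfoldRow {J K V H : ℕ} (ν : (Fin K → Fin H) → ℝ)
    (θ : Fin J → (Fin K → Fin H) → Fin V → ℝ) (S : Finset (Fin J)) :
    Matrix ({j // j ∈ S} → Fin V) ({j // j ∈ Sᶜ} → Fin V) ℝ :=
  unfoldT ν θ S Sᶜ

/-- Marginal pmf of `Y_S`. -/
noncomputable def marginalP {J K V H : ℕ} (ν : (Fin K → Fin H) → ℝ)
    (θ : Fin J → (Fin K → Fin H) → Fin V → ℝ) (S : Finset (Fin J))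
    (r : {j // j ∈ S} → Fin V) : ℝ :=
  ∑ y : Fin J → Fin V, if ∀ j : {j // j ∈ S}, y j.1 = r j then jointP ν θ y else 0

/-- Assumption 1: single-parent CPTs have full column rank `H`. -/
def Assumption1 {J K V H : ℕ} [NeZero H] (G : Fin J → Fin K → Bool)
    (θ : Fin J → (Fin K → Fin H) → Fin V → ℝ) : Prop :=
  ∀ j : Fin J, (co G j).card = 1 → (cpt θ {j} (co G j)).rank = H

/-- Assumption 2: each connected latent variable makes a difference. -/
def Assumption2 {J K V H : ℕ} (G : Fin J → Fin K → Bool)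
    (θ : Fin J → (Fin K → Fin H) → Fin V → ℝ) : Prop :=
  ∀ j : Fin J, ∀ k ∈ co G j, ∃ a : Fin K → Fin H, ∃ h h' : Fin H,
    θ j (Function.update a k h) ≠ θ j (Function.update a k h')

/-- Pure-child graph condition: every observed variable has a parent and every
latent variable has at least two pure children. -/
def PureChild {J K : ℕ} (G : Fin J → Fin K → Bool) : Prop :=
  (∀ j, (co G j).Nonempty) ∧
    ∀ k : Fin K,
      2 ≤ (Finset.univ.filter (fun j => co G j = ({k} : Finset (Fin K)))).card

/-- Pairwise rank condition (paper's Lemma 3 conclusion, holding generically). -/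
def PairwiseRank {J K V H : ℕ} [NeZero H] (G : Fin J → Fin K → Bool)
    (θ : Fin J → (Fin K → Fin H) → Fin V → ℝ) : Prop :=
  ∀ j₁ j₂ : Fin J, j₁ ≠ j₂ → (¬ ∃ k : Fin K, co G j₁ ∪ co G j₂ = {k}) →
    H < (cpt θ ({j₁, j₂} : Finset (Fin J)) (co G j₁ ∪ co G j₂)).rank

/-- Khatri–Rao (column-wise Kronecker) product. -/
noncomputable def khatriRao {I J R : ℕ} (A : Matrix (Fin I) (Fin R) ℝ)
    (B : Matrix (Fin J) (Fin R) ℝ) : Matrix (Fin I × Fin J) (Fin R) ℝ :=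
  Matrix.of fun p r => A p.1 r * B p.2 r

/-- Kruskal rank: the largest `r` such that every `r` columns are linearly
independent. -/
noncomputable def krank {I R : ℕ} (A : Matrix (Fin I) (Fin R) ℝ) : ℕ :=
  @Nat.findGreatest
    (fun r => ∀ s : Finset (Fin R), s.card = r →
      LinearIndependent ℝ (fun j : {x // x ∈ s} => (fun i => A i j.1)))
    (Classical.decPred _) R

/-- The joint probability table `P(A_S, A)`. -/
noncomputable def jointLatent {K H : ℕ} (ν : (Fin K → Fin H) → ℝ) (S : Finset (Fin K)) :
    Matrix ({k // k ∈ S} → Fin H) (Fin K → Fin H) ℝ :=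
  Matrix.of fun a b => if ∀ k : {k // k ∈ S}, b k.1 = a k then ν b else 0

/-- A family of `m` pairwise disjoint subsets of observed variables witnessing the
rank certificate of Proposition 1. -/
def GoodFamily {J K V H : ℕ} [NeZero H] (ν : (Fin K → Fin H) → ℝ)
    (θ : Fin J → (Fin K → Fin H) → Fin V → ℝ) (m : ℕ) : Prop :=
  ∃ S : Fin m → Finset (Fin J),
    (∀ l l', l ≠ l' → Disjoint (S l) (S l')) ∧
    (∀ l, 2 ≤ (S l).card) ∧
    (∀ l, ∀ j₁ ∈ S l, ∀ j₂ ∈ S l, j₁ ≠ j₂ →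
      (unfoldRow ν θ ({j₁, j₂} : Finset (Fin J))).rank ≤ H) ∧
    (∀ l l', l ≠ l' → ∀ j₁ ∈ S l, ∀ j₂ ∈ S l',
      H < (unfoldRow ν θ ({j₁, j₂} : Finset (Fin J))).rank)

/-- Index type for the free parameters of the pair `(θ_{j₁}, θ_{j₂})`:
for each `j ∈ {j₁,j₂}`, each latent configuration on `co G j`, and each
`v ∈ {0,…,V-2}` one real parameter (the `v = V-1` entry is determined by
normalization). -/
abbrev ParamIx (V H : ℕ) {J K : ℕ} (G : Fin J → Fin K → Bool) (j₁ j₂ : Fin J) : Type :=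
  Σ j : {j // j ∈ ({j₁, j₂} : Finset (Fin J))},
    (({k // k ∈ co G j.1} → Fin H) × Fin (V - 1))

/-- The conditional probability tables determined by a parameter point
`x : ℝ^D`. -/
noncomputable def thetaOf {J K : ℕ} (V H : ℕ) [NeZero H] [NeZero V]
    (G : Fin J → Fin K → Bool) (j₁ j₂ : Fin J)
    (x : ParamIx V H G j₁ j₂ → ℝ) :
    Fin J → (Fin K → Fin H) → Fin V → ℝ :=
  fun j a v =>
    if hj : j ∈ ({j₁, j₂} : Finset (Fin J)) then
      if hv : v.1 < V - 1 then
        x ⟨⟨j, hj⟩, (fun k => a k.1, ⟨v.1, hv⟩)⟩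
      else 1 - ∑ v' : Fin (V - 1), x ⟨⟨j, hj⟩, (fun k => a k.1, v')⟩
    else if v = 0 then 1 else 0

theorem _root_.Matrix.linearIndependent_col_iff_rank_eq_card {K m n : Type*} [Field K]
    [Fintype n] (M : Matrix m n K) :
    LinearIndependent K M.col ↔ M.rank = Fintype.card n := by
  rw [linearIndependent_iff_card_eq_finrank_span, Set.finrank, rank_eq_finrank_span_cols, eq_comm]

theorem _root_.LinearIndependent.khatriRao {K ι κ ρ : Type*} [CommRing K] [NoZeroDivisors K]
    {a : ρ → ι → K} {b : ρ → κ → K} (ha : LinearIndependent K a) (hb : ∀ r, b r ≠ 0) :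
    LinearIndependent K fun r (p : ι × κ) => a r p.1 * b r p.2 := by
  rw [linearIndependent_iff']
  intro s g hg r hr
  obtain ⟨j, hj⟩ := Function.ne_iff.mp (hb r)
  -- The `j`-th slice of the vanishing combination is a vanishing combination of the `a r`.
  have hslice : ∑ r ∈ s, (g r * b r j) • a r = 0 := by
    funext i
    simpa [Finset.sum_apply, mul_assoc, mul_comm, mul_left_comm] using congrFun hg (i, j)
  exact (mul_eq_zero.mp (linearIndependent_iff'.mp ha s _ hslice r hr)).resolve_right hj

/-- Khatri–Rao product of a full-column-rank matrix with a matrix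
having no zero column has full column rank. -/
theorem khatriRao_fullColumnRank
    {I J R : ℕ} (A : Matrix (Fin I) (Fin R) ℝ) (B : Matrix (Fin J) (Fin R) ℝ)
    (hA : A.rank = R) (hB : ∀ r : Fin R, ∃ i : Fin J, B i r ≠ 0) :
    (khatriRao A B).rank = R := by
  have hAcol : LinearIndependent ℝ A.col := by
    rwa [linearIndependent_col_iff_rank_eq_card, Fintype.card_fin]
  have hBcol : ∀ r, B.col r ≠ 0 := fun r hr => (hB r).elim fun i hi => hi (congrFun hr i)
  have hcol : LinearIndependent ℝ (khatriRao A B).col := hAcol.khatriRao hBcol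
  rwa [linearIndependent_col_iff_rank_eq_card, Fintype.card_fin] at hcol

end LBGM
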